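/- Suppose there exists a sequence of hypotheses h^{(t)} ∈ ℋ_t such that lim_{t→∞} E[R_t(h^{(t)}) − R_t*] = 0, and let (u_t)_{t ∈ ℕ} be a sequence of natural numbers with u_t ≤ t for all t and u_t → ∞ as t → ∞. Then there exist hypotheses h̃^{(t)} ∈ ℋ_t and a nondecreasing sequence of timepoints (τ_t)_{t ∈ ℕ} with τ_t ≤ t and τ_t → ∞ such that, almost surely, lim_{t→∞} ( E[ sup_{m ≥ u_t} e_m(h̃^{(t)}) | ℱ_{τ_t} ] − R*_{τ_t} ) = 0. -/
import Mathlib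

open MeasureTheory Filter Topology

/-- For a bounded real sequence, the tail sups tend (antitonely) to the limsup. -/
lemma aux_sup_tail_tendsto_limsup (f : ℕ → ℝ) (C : ℝ) (hC : ∀ m, |f m| ≤ C) :
    Tendsto (fun v => ⨆ m, f (v + m)) atTop (𝓝 (limsup f atTop)) := by
  have hb : ∀ v, BddAbove (Set.range fun m => f (v + m)) := fun v =>
    ⟨C, by rintro x ⟨m, rfl⟩; exact (abs_le.1 (hC _)).2⟩
  set a : ℕ → ℝ := fun v => ⨆ m, f (v + m) with ha
  have hca : ∀ v m, f (v + m) ≤ a v := fun v m => le_ciSup (hb v) m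
  have hle : ∀ v n, v ≤ n → f n ≤ a v := by
    intro v n hvn
    have h : n = v + (n - v) := by omega
    rw [h]; exact hca v _
  have hanti : Antitone a := fun v w hvw => ciSup_le fun m => hle v (w + m) (by omega)
  have hlb : ∀ v, -C ≤ a v := fun v => le_trans (abs_le.1 (hC (v + 0))).1 (hca v 0)
  have hbdd_below : BddBelow (Set.range a) := ⟨-C, by rintro x ⟨v, rfl⟩; exact hlb v⟩
  have htend : Tendsto a atTop (𝓝 (⨅ v, a v)) := tendsto_atTop_ciInf hanti hbdd_below
  have hS_bdd : BddBelow {x | ∀ᶠ n in atTop, f n ≤ x} := by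
    refine ⟨-C, fun x hx => ?_⟩
    obtain ⟨n, hn⟩ := hx.exists
    exact le_trans (abs_le.1 (hC n)).1 hn
  have heq : limsup f atTop = ⨅ v, a v := by
    rw [limsup_eq]
    apply le_antisymm
    · refine le_ciInf fun v => csInf_le hS_bdd ?_
      exact eventually_atTop.2 ⟨v, fun n hn => hle v n hn⟩
    · refine le_csInf ⟨C, Eventually.of_forall fun n => (abs_le.1 (hC n)).2⟩ fun x hx => ?_
      obtain ⟨v, hv⟩ := eventually_atTop.1 hx
      exact le_trans (ciInf_le hbdd_below v) (ciSup_le fun m => hv (v + m) (by omega))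
  rw [heq]; exact htend

/-- Nonnegative integrable functions with summable integrals tend to zero a.e. -/
lemma aux_ae_tendsto_zero {Ω : Type*} {m0 : MeasurableSpace Ω} {μ : Measure Ω}
    (W : ℕ → Ω → ℝ) (hint : ∀ k, Integrable (W k) μ) (hnn : ∀ k, 0 ≤ᵐ[μ] W k)
    (hsum : Summable fun k => ∫ ω, W k ω ∂μ) :
    ∀ᵐ ω ∂μ, Tendsto (fun k => W k ω) atTop (𝓝 0) := by
  have h1 : ∀ k, ∫⁻ ω, ENNReal.ofReal (W k ω) ∂μ = ENNReal.ofReal (∫ ω, W k ω ∂μ) :=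
    fun k => (ofReal_integral_eq_lintegral_ofReal (hint k) (hnn k)).symm
  have hmeas : ∀ k, AEMeasurable (fun ω => ENNReal.ofReal (W k ω)) μ :=
    fun k => (hint k).aemeasurable.ennreal_ofReal
  have h2 : ∫⁻ ω, ∑' k, ENNReal.ofReal (W k ω) ∂μ ≠ ⊤ := by
    rw [lintegral_tsum hmeas]
    simp_rw [h1]
    have hnn' : ∀ k, 0 ≤ ∫ ω, W k ω ∂μ := fun k => integral_nonneg_of_ae (hnn k)
    rw [← ENNReal.ofReal_tsum_of_nonneg hnn' hsum]
    exact ENNReal.ofReal_ne_top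
  have h3 : ∀ᵐ ω ∂μ, ∑' k, ENNReal.ofReal (W k ω) ≠ ⊤ := by
    have := ae_lt_top' (AEMeasurable.ennreal_tsum hmeas) h2
    filter_upwards [this] with ω hω using hω.ne
  filter_upwards [h3, ae_all_iff.2 hnn] with ω hω hωnn
  have h4 : Tendsto (fun k => ENNReal.ofReal (W k ω)) atTop (𝓝 0) :=
    ENNReal.tendsto_atTop_zero_of_tsum_ne_top hω
  have h5 : Tendsto (fun k => (ENNReal.ofReal (W k ω)).toReal) atTop
      (𝓝 ((0 : ENNReal)).toReal) :=
    (ENNReal.tendsto_toReal ENNReal.zero_ne_top).comp h4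
  simpa using h5.congr fun k => ENNReal.toReal_ofReal (hωnn k)

/-- the paper's Lemma. Setting: a probability space with a filtration `ℱ`,
a nondecreasing family of nonempty hypothesis classes `ℋ t ⊆ H`, and for each hypothesis
`h` a sequence of partial cumulative prospective losses `e h m : Ω → ℝ` with integrable
envelope `⨆ m, |e h m|`.  The prospective risk of `h` at time `t` is
`R t h = E[limsup_m e h m | ℱ t]`, and the Bayes risk `Rstar t` is `ℱ t`-measurable,
integrable, and satisfies `Rstar t ≤ E[sup_{m ≥ u} e h m | ℱ t]` a.s. for every
`h ∈ ℋ t` and every `u` (here `sup_{m ≥ u} e h m` is written `⨆ m, e h (u + m)`).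

If there are hypotheses `h0 t ∈ ℋ t` with `E[R t (h0 t) − Rstar t] → 0`, and `u t ≤ t`
with `u t → ∞`, then there exist hypotheses `htil t ∈ ℋ t` and a nondecreasing sequence
of timepoints `τ t ≤ t` with `τ t → ∞` such that, almost surely,
`E[sup_{m ≥ u t} e (htil t) m | ℱ (τ t)] − Rstar (τ t) → 0`. -/
theorem expected_sup_partial_sum_to_Bayes_risk
    {Ω : Type*} {m0 : MeasurableSpace Ω} (μ : Measure Ω) [IsProbabilityMeasure μ]
    (ℱ : Filtration ℕ m0)
    {H : Type*} (ℋ : ℕ → Set H) (hℋmono : Monotone ℋ) (hℋne : ∀ t, (ℋ t).Nonempty)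
    (e : H → ℕ → Ω → ℝ) (hemeas : ∀ h m, Measurable (e h m))
    (hbdd : ∀ h ω, BddAbove (Set.range fun m => |e h m ω|))
    (henv : ∀ h, Integrable (fun ω => ⨆ m, |e h m ω|) μ)
    (Rstar : ℕ → Ω → ℝ)
    (hRsmeas : ∀ t, StronglyMeasurable[ℱ t] (Rstar t))
    (hRsint : ∀ t, Integrable (Rstar t) μ)
    (hRsle : ∀ t, ∀ h ∈ ℋ t, ∀ u : ℕ, ∀ᵐ ω ∂μ,
      Rstar t ω ≤ (μ[fun ω' => ⨆ m, e h (u + m) ω' | ℱ t]) ω)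
    (h0 : ℕ → H) (hh0 : ∀ t, h0 t ∈ ℋ t)
    (hcons : Tendsto
      (fun t => ∫ ω,
        ((μ[fun ω' => limsup (fun m => e (h0 t) m ω') atTop | ℱ t]) ω - Rstar t ω) ∂μ)
      atTop (𝓝 0))
    (u : ℕ → ℕ) (hu_le : ∀ t, u t ≤ t) (hu : Tendsto u atTop atTop) :
    ∃ (htil : ℕ → H) (τ : ℕ → ℕ),
      (∀ t, htil t ∈ ℋ t) ∧ Monotone τ ∧ (∀ t, τ t ≤ t) ∧ Tendsto τ atTop atTop ∧
      ∀ᵐ ω ∂μ, Tendsto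
        (fun t => (μ[fun ω' => ⨆ m, e (htil t) (u t + m) ω' | ℱ (τ t)]) ω - Rstar (τ t) ω)
        atTop (𝓝 0) := by
  classical
  set env : H → Ω → ℝ := fun h ω => ⨆ m, |e h m ω| with henv_def
  set F : H → ℕ → Ω → ℝ := fun h v ω => ⨆ m, e h (v + m) ω with hF_def
  set L : H → Ω → ℝ := fun h ω => limsup (fun m => e h m ω) atTop with hL_def
  have habs_e : ∀ h m ω, |e h m ω| ≤ env h ω := fun h m ω => le_ciSup (hbdd h ω) m
  have hbF : ∀ h v ω, BddAbove (Set.range fun m => e h (v + m) ω) := fun h v ω =>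
    ⟨env h ω, by rintro x ⟨m, rfl⟩; exact le_trans (le_abs_self _) (habs_e h _ ω)⟩
  have hFtend : ∀ h ω, Tendsto (fun v => F h v ω) atTop (𝓝 (L h ω)) := fun h ω =>
    aux_sup_tail_tendsto_limsup _ (env h ω) (fun m => habs_e h m ω)
  have hFanti : ∀ h ω, Antitone (fun v => F h v ω) := by
    intro h ω a b hab
    refine ciSup_le fun m => ?_
    have h2 : b + m = a + (b - a + m) := by omega
    rw [h2]
    exact le_ciSup (hbF h a ω) _
  have hFabs : ∀ h v ω, |F h v ω| ≤ env h ω := by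
    intro h v ω
    rw [abs_le]
    constructor
    · exact le_trans (abs_le.1 (habs_e h (v + 0) ω)).1 (le_ciSup (hbF h v ω) 0)
    · exact ciSup_le fun m => le_trans (le_abs_self _) (habs_e h _ ω)
  have hFmeas : ∀ h v, Measurable (F h v) := fun h v =>
    Measurable.iSup (fun m => hemeas h (v + m))
  have hFint : ∀ h v, Integrable (F h v) μ := fun h v =>
    (henv h).mono' (hFmeas h v).aestronglyMeasurable
      (ae_of_all _ fun ω => by rw [Real.norm_eq_abs]; exact hFabs h v ω)
  have hLmeas : ∀ h, Measurable (L h) := fun h =>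
    measurable_of_tendsto_metrizable (fun v => hFmeas h v)
      (tendsto_pi_nhds.2 fun ω => hFtend h ω)
  have hLabs : ∀ h ω, |L h ω| ≤ env h ω := by
    intro h ω
    rw [abs_le]
    constructor
    · exact ge_of_tendsto (hFtend h ω)
        (Eventually.of_forall fun v => (abs_le.1 (hFabs h v ω)).1)
    · exact le_of_tendsto (hFtend h ω)
        (Eventually.of_forall fun v => (abs_le.1 (hFabs h v ω)).2)
  have hLint : ∀ h, Integrable (L h) μ := fun h =>
    (henv h).mono' (hLmeas h).aestronglyMeasurable
      (ae_of_all _ fun ω => by rw [Real.norm_eq_abs]; exact hLabs h ω)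
  have hIntTend : ∀ h, Tendsto (fun v => ∫ ω, F h v ω ∂μ) atTop (𝓝 (∫ ω, L h ω ∂μ)) :=
    fun h => tendsto_integral_of_dominated_convergence (env h)
      (fun v => (hFmeas h v).aestronglyMeasurable) (henv h)
      (fun v => ae_of_all _ fun ω => by rw [Real.norm_eq_abs]; exact hFabs h v ω)
      (ae_of_all _ fun ω => hFtend h ω)
  -- rewrite the consistency hypothesis in terms of plain integrals
  have hεeq : ∀ t, (∫ ω, ((μ[fun ω' => limsup (fun m => e (h0 t) m ω') atTop | ℱ t]) ω
        - Rstar t ω) ∂μ) = ∫ ω, L (h0 t) ω ∂μ - ∫ ω, Rstar t ω ∂μ := by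
    intro t
    rw [integral_sub integrable_condExp (hRsint t), integral_condExp (ℱ.le t)]
  -- choose the timepoints s
  have hN : ∀ k : ℕ, ∃ N, ∀ t, N ≤ t →
      ∫ ω, L (h0 t) ω ∂μ - ∫ ω, Rstar t ω ∂μ < (1/4 : ℝ)^k := by
    intro k
    have hpos : (0 : ℝ) < (1/4 : ℝ)^k := by positivity
    have hev := hcons.eventually (gt_mem_nhds hpos)
    obtain ⟨N, hN⟩ := eventually_atTop.1 hev
    exact ⟨N, fun t ht => by rw [← hεeq t]; exact hN t ht⟩
  choose N hNspec using hN
  set s : ℕ → ℕ := fun k => Nat.rec (N 0) (fun k ih => max (ih + 1) (N (k + 1))) k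
    with hs_def
  have hs_succ : ∀ k, s (k + 1) = max (s k + 1) (N (k + 1)) := fun k => rfl
  have hs_mono : StrictMono s := strictMono_nat_of_lt_succ fun k => by
    rw [hs_succ]; exact lt_of_lt_of_le (Nat.lt_succ_self _) (le_max_left _ _)
  have hsN : ∀ k, N k ≤ s k := by
    intro k
    cases k with
    | zero => exact le_rfl
    | succ k => rw [hs_succ]; exact le_max_right _ _
  set g : ℕ → H := fun k => h0 (s k) with hg_def
  have hεs : ∀ k, ∫ ω, L (g k) ω ∂μ - ∫ ω, Rstar (s k) ω ∂μ < (1/4 : ℝ)^k :=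
    fun k => hNspec k (s k) (hsN k)
  -- choose the tail cutoffs v
  have hv : ∀ k, ∃ v, ∫ ω, F (g k) v ω ∂μ < ∫ ω, L (g k) ω ∂μ + (1/4 : ℝ)^k := by
    intro k
    have hpos : (0 : ℝ) < (1/4 : ℝ)^k := by positivity
    exact ((hIntTend (g k)).eventually (gt_mem_nhds (lt_add_of_pos_right _ hpos))).exists
  choose v hvspec using hv
  -- the dominating nonnegative random variables W k
  set W : ℕ → Ω → ℝ := fun k ω => (μ[F (g k) (v k) | ℱ (s k)]) ω - Rstar (s k) ω with hW_def
  have hWint : ∀ k, Integrable (W k) μ := fun k => integrable_condExp.sub (hRsint (s k))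
  have hWnn : ∀ k, 0 ≤ᵐ[μ] W k := by
    intro k
    filter_upwards [hRsle (s k) (g k) (hh0 (s k)) (v k)] with ω hω
    exact sub_nonneg.2 hω
  have hWbound : ∀ k, ∫ ω, W k ω ∂μ ≤ 2 * (1/4 : ℝ)^k := by
    intro k
    have h1 : ∫ ω, W k ω ∂μ = ∫ ω, F (g k) (v k) ω ∂μ - ∫ ω, Rstar (s k) ω ∂μ := by
      rw [hW_def]
      rw [integral_sub integrable_condExp (hRsint (s k)), integral_condExp (ℱ.le (s k))]
    rw [h1]
    have h2 := hvspec k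
    have h3 := hεs k
    linarith
  have hWsum : Summable fun k => ∫ ω, W k ω ∂μ := by
    refine Summable.of_nonneg_of_le (fun k => integral_nonneg_of_ae (hWnn k))
      (fun k => hWbound k) ?_
    exact (summable_geometric_of_lt_one (by norm_num) (by norm_num)).mul_left 2
  have hWae : ∀ᵐ ω ∂μ, Tendsto (fun k => W k ω) atTop (𝓝 0) :=
    aux_ae_tendsto_zero W hWint hWnn hWsum
  -- the reparametrization
  set P : ℕ → ℕ → Prop := fun k t => s k ≤ t ∧ ∀ t', t ≤ t' → v k ≤ u t' with hP_def
  set κ : ℕ → ℕ := fun t => Nat.findGreatest (fun k => P k t) t with hκ_def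
  set good : ℕ → Prop := fun t => ∃ k, k ≤ t ∧ P k t with hgood_def
  have hPmono : ∀ k t t', t ≤ t' → P k t → P k t' := fun k t t' h hp =>
    ⟨hp.1.trans h, fun t'' h'' => hp.2 t'' (h.trans h'')⟩
  have hgoodP : ∀ t, good t → P (κ t) t := by
    intro t ht
    obtain ⟨k, hk, hp⟩ := ht
    rw [hκ_def]
    exact Nat.findGreatest_spec (P := fun k => P k t) hk hp
  have hgood_mono : ∀ t t', t ≤ t' → good t → good t' := fun t t' h ht => by
    obtain ⟨k, hk, hp⟩ := ht
    exact ⟨k, hk.trans h, hPmono k t t' h hp⟩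
  have hκle : ∀ t, κ t ≤ t := by
    intro t
    rw [hκ_def]
    exact Nat.findGreatest_le t
  have hκmono_good : ∀ t, good t → κ t ≤ κ (t + 1) := by
    intro t hg
    conv_rhs => rw [hκ_def]
    exact Nat.le_findGreatest (P := fun k => P k (t+1)) ((hκle t).trans (Nat.le_succ t))
      (hPmono (κ t) t (t + 1) (Nat.le_succ t) (hgoodP t hg))
  set τ : ℕ → ℕ := fun t => if good t then s (κ t) else 0 with hτ_def
  set htil : ℕ → H := fun t => if good t then h0 (s (κ t)) else (hℋne t).choose
    with hhtil_def
  have hbig : ∀ K, ∃ T, ∀ t, T ≤ t → good t ∧ K ≤ κ t := by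
    intro K
    obtain ⟨T1, hT1⟩ := eventually_atTop.1 (hu.eventually (eventually_ge_atTop (v K)))
    refine ⟨max (max (s K) T1) K, fun t ht => ?_⟩
    have h1 : s K ≤ t := le_trans (le_trans (le_max_left _ _) (le_max_left _ _)) ht
    have h2 : T1 ≤ t := le_trans (le_trans (le_max_right _ _) (le_max_left _ _)) ht
    have h3 : K ≤ t := le_trans (le_max_right _ _) ht
    have hPK : P K t := ⟨h1, fun t' ht' => hT1 t' (h2.trans ht')⟩
    refine ⟨⟨K, h3, hPK⟩, ?_⟩
    rw [hκ_def]
    exact Nat.le_findGreatest (P := fun k => P k t) h3 hPK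
  have hgood_ev : ∀ᶠ t in atTop, good t := by
    obtain ⟨T, hT⟩ := hbig 0
    exact eventually_atTop.2 ⟨T, fun t ht => (hT t ht).1⟩
  have hκtend : Tendsto κ atTop atTop :=
    tendsto_atTop_atTop.2 fun K => (hbig K).imp fun T hT t ht => (hT t ht).2
  refine ⟨htil, τ, ?_, ?_, ?_, ?_, ?_⟩
  · -- membership
    intro t
    by_cases hg : good t
    · have h1 : htil t = h0 (s (κ t)) := if_pos hg
      rw [h1]
      exact hℋmono (hgoodP t hg).1 (hh0 (s (κ t)))
    · have h1 : htil t = (hℋne t).choose := if_neg hg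
      rw [h1]
      exact (hℋne t).choose_spec
  · -- monotone
    refine monotone_nat_of_le_succ fun t => ?_
    by_cases hg : good t
    · have hg' : good (t + 1) := hgood_mono t (t + 1) (Nat.le_succ t) hg
      have h1 : τ t = s (κ t) := if_pos hg
      have h2 : τ (t + 1) = s (κ (t + 1)) := if_pos hg'
      rw [h1, h2]
      exact hs_mono.monotone (hκmono_good t hg)
    · have h1 : τ t = 0 := if_neg hg
      rw [h1]; exact Nat.zero_le _
  · -- τ t ≤ t
    intro t
    by_cases hg : good t
    · have h1 : τ t = s (κ t) := if_pos hg
      rw [h1]; exact (hgoodP t hg).1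
    · have h1 : τ t = 0 := if_neg hg
      rw [h1]; exact Nat.zero_le _
  · -- τ → ∞
    refine tendsto_atTop_atTop.2 fun K => ?_
    obtain ⟨T, hT⟩ := hbig K
    refine ⟨T, fun t ht => ?_⟩
    obtain ⟨hg, hκ⟩ := hT t ht
    have h1 : τ t = s (κ t) := if_pos hg
    rw [h1]
    exact le_trans hκ hs_mono.le_apply
  · -- the a.s. convergence
    have hA1 : ∀ᵐ ω ∂μ, ∀ k w, Rstar (s k) ω ≤ (μ[F (g k) w | ℱ (s k)]) ω :=
      ae_all_iff.2 fun k => ae_all_iff.2 fun w => hRsle (s k) (g k) (hh0 (s k)) w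
    have hA2 : ∀ᵐ ω ∂μ, ∀ k w, v k ≤ w →
        (μ[F (g k) w | ℱ (s k)]) ω ≤ (μ[F (g k) (v k) | ℱ (s k)]) ω := by
      refine ae_all_iff.2 fun k => ae_all_iff.2 fun w => ?_
      by_cases hw : v k ≤ w
      · have hle := condExp_mono (m := ℱ (s k)) (hFint (g k) w) (hFint (g k) (v k))
          (ae_of_all _ fun ω => hFanti (g k) ω hw)
        filter_upwards [hle] with ω hω _
        exact hω
      · filter_upwards with ω hw'
        exact absurd hw' hw
    filter_upwards [hA1, hA2, hWae] with ω h1 h2 h3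
    have hWκ : Tendsto (fun t => W (κ t) ω) atTop (𝓝 0) := h3.comp hκtend
    refine tendsto_of_tendsto_of_tendsto_of_le_of_le' tendsto_const_nhds hWκ ?_ ?_
    · filter_upwards [hgood_ev] with t hg
      have hτt : τ t = s (κ t) := if_pos hg
      have hht : htil t = g (κ t) := if_pos hg
      rw [hτt, hht]
      exact sub_nonneg.2 (h1 (κ t) (u t))
    · filter_upwards [hgood_ev] with t hg
      have hτt : τ t = s (κ t) := if_pos hg
      have hht : htil t = g (κ t) := if_pos hg
      rw [hτt, hht]
      have hvu : v (κ t) ≤ u t := (hgoodP t hg).2 t le_rfl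
      exact sub_le_sub_right (h2 (κ t) (u t) hvu) _
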